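/- Let S be a finite set, D : S → [0,∞) with Σ_{x∈S} D(x) = 1, and h, c : S → {-1,1}; let ε̃ := Σ_{x : h(x) ≠ c(x)} D(x). Let q ≥ 3 be a real with 0 ≤ ε̃ ≤ 1/q, set ε' := 1/q, α' := (1/2)·ln(q-1), Z' := 2·(1+2/q)·√((1/q)·(1-1/q)), and Z := (1-ε̃)·(2-1/q)·exp(-α') + ε̃·(1/q)·exp(α'). Define D'(x) := D(x)·(2-1/q)·exp(-α')/Z' if h(x) = c(x), D'(x) := D(x)·(1/q)·exp(α')/Z' if h(x) ≠ c(x), and D*(x) := the same numerator as D'(x) but divided by Z instead of Z'. Then Σ_{x∈S} √(D'(x)·D*(x)) ≥ 1 - 2/q. -/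

import Mathlib

/-!
Both updates rescale the same weight function `N` (the numerators), and `∑ N = Z`, so the overlap
equals `√(Z / Z')`. With `exp α' = √(q - 1)` one finds `Z = (2 - 1/q - ε̃) / √(q - 1)` and
`Z' = 2 (1 + 2/q) √(q - 1) / q`, hence `ε̃ ≤ 1/q` gives `Z / Z' ≥ q / (q + 2) ≥ (1 - 2/q)²`.
-/

open Real Finset

lemma Real.exp_half_mul_log {x : ℝ} (hx : 0 < x) : exp (1 / 2 * log x) = √x := by
  rw [sqrt_eq_rpow, rpow_def_of_pos hx, mul_comm]

theorem Finset.sum_sqrt_div_mul_div_sum {ι : Type*} (S : Finset ι) (N : ι → ℝ)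
    (hN : ∀ x ∈ S, 0 ≤ N x) (a : ℝ) :
    ∑ x ∈ S, √(N x / a * (N x / ∑ y ∈ S, N y)) = √((∑ y ∈ S, N y) / a) := by
  set b := ∑ y ∈ S, N y
  have hb : 0 ≤ b := sum_nonneg hN
  calc ∑ x ∈ S, √(N x / a * (N x / b)) = ∑ x ∈ S, N x / √(a * b) :=
        sum_congr rfl fun x hx => by
          rw [div_mul_div_comm, sqrt_div (mul_self_nonneg _), sqrt_mul_self (hN x hx)]
    _ = √b * √b / (√a * √b) := by rw [← sum_div, mul_self_sqrt hb, sqrt_mul' _ hb]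
    _ = √(b / a) := by
          rcases hb.eq_or_lt with h | h
          · simp [← h]
          · rw [mul_div_mul_right _ _ (sqrt_pos.2 h).ne', sqrt_div hb]

lemma sq_one_sub_two_div_le {q : ℝ} (hq : 2 ≤ q) : (1 - 2 / q) ^ 2 ≤ q / (q + 2) := by
  rw [le_div_iff₀ (by linarith)]
  have : 0 < q := by linarith
  field_simp
  nlinarith

lemma one_sub_two_div_le_sqrt_normalizer_ratio {q ε : ℝ} (hq : 2 ≤ q) (hε : ε ≤ 1 / q) :
    1 - 2 / q ≤ √(((1 - ε) * (2 - 1 / q) * exp (-(1 / 2 * log (q - 1)))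
        + ε * (1 / q) * exp (1 / 2 * log (q - 1)))
      / (2 * (1 + 2 / q) * √((1 / q) * (1 - 1 / q)))) := by
  have hq0 : 0 < q := by linarith
  have hq1 : 0 < q - 1 := by linarith
  have hs : 0 < √(q - 1) := sqrt_pos.2 hq1
  have hs2 : √(q - 1) ^ 2 = q - 1 := sq_sqrt hq1.le
  have hZ : (1 - ε) * (2 - 1 / q) * exp (-(1 / 2 * log (q - 1)))
      + ε * (1 / q) * exp (1 / 2 * log (q - 1)) = (2 - 1 / q - ε) / √(q - 1) := by
    rw [exp_neg, exp_half_mul_log hq1]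
    field_simp
    linear_combination ε * hs2
  have hZ' : √((1 / q) * (1 - 1 / q)) = √(q - 1) / q := by
    rw [show (1 / q) * (1 - 1 / q) = (q - 1) / q ^ 2 by field_simp, sqrt_div hq1.le, sqrt_sq hq0.le]
  have hratio : q / (q + 2) ≤ (2 - 1 / q - ε) / √(q - 1) / (2 * (1 + 2 / q) * (√(q - 1) / q)) := by
    calc q / (q + 2) = (2 - 2 / q) * q ^ 2 / (2 * (q + 2) * (q - 1)) := by
          field_simp
      _ ≤ (2 - 1 / q - ε) * q ^ 2 / (2 * (q + 2) * (q - 1)) := by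
          gcongr ?_ * _ / _; linarith [show 2 / q = 1 / q + 1 / q by ring]
      _ = _ := by
          field_simp; rw [hs2]
  rw [hZ, hZ']
  exact (le_abs_self _).trans (abs_le_sqrt ((sq_one_sub_two_div_le hq).trans hratio))

theorem no_instance_fidelity_general {α : Type*} (S : Finset α) (D h c : α → ℝ)
    (hD : ∀ x ∈ S, 0 ≤ D x) (hsum : ∑ x ∈ S, D x = 1)
    (q εt : ℝ) (hq : 3 ≤ q)
    (hεt : εt = ∑ x ∈ S.filter (fun x => h x ≠ c x), D x)
    (hεtq : εt ≤ 1 / q)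
    (α' Z' Z : ℝ) (hα' : α' = (1 / 2) * Real.log (q - 1))
    (hZ' : Z' = 2 * (1 + 2 / q) * Real.sqrt ((1 / q) * (1 - 1 / q)))
    (hZ : Z = (1 - εt) * (2 - 1 / q) * Real.exp (-α') + εt * (1 / q) * Real.exp α')
    (D' Dstar : α → ℝ)
    (hD' : ∀ x ∈ S, D' x =
      if h x = c x then D x * (2 - 1 / q) * Real.exp (-α') / Z'
      else D x * (1 / q) * Real.exp α' / Z')
    (hDstar : ∀ x ∈ S, Dstar x =
      if h x = c x then D x * (2 - 1 / q) * Real.exp (-α') / Z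
      else D x * (1 / q) * Real.exp α' / Z) :
    1 - 2 / q ≤ ∑ x ∈ S, Real.sqrt (D' x * Dstar x) := by
  set N : α → ℝ := fun x =>
    if h x = c x then D x * (2 - 1 / q) * exp (-α') else D x * (1 / q) * exp α'
  have hN : ∀ x ∈ S, 0 ≤ N x := fun x hx => by
    have := hD x hx
    have : 0 < 2 - 1 / q := by rw [sub_pos, div_lt_iff₀ (by linarith)]; linarith
    simp only [N]; split_ifs <;> positivity
  have hcorrect : ∑ x ∈ S.filter (fun x => h x = c x), D x = 1 - εt := by
    rw [hεt, ← hsum, ← sum_filter_add_sum_filter_not S (fun x => h x = c x)]; ring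
  have hNsum : ∑ x ∈ S, N x = Z := by
    simp only [N, sum_ite, ← sum_mul, hcorrect, ← hεt, hZ]
  have hfid : ∑ x ∈ S, √(D' x * Dstar x) = ∑ x ∈ S, √(N x / Z' * (N x / ∑ y ∈ S, N y)) :=
    sum_congr rfl fun x hx => by
      rw [hD' x hx, hDstar x hx, hNsum]; simp only [N]; split_ifs <;> rfl
  rw [hfid, sum_sqrt_div_mul_div_sum S N hN, hNsum, hZ, hZ', hα']
  exact one_sub_two_div_le_sqrt_normalizer_ratio (by linarith) hεtq

/-- Fidelity-type overlap between the approximately normalized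
    ('no'-instance) update D' and the exactly normalized update D* is at
    least 1 - 2/q. -/
theorem no_instance_fidelity {α : Type*} (S : Finset α) (D h c : α → ℝ)
    (hD : ∀ x ∈ S, 0 ≤ D x) (hsum : ∑ x ∈ S, D x = 1)
    (hh : ∀ x ∈ S, h x = 1 ∨ h x = -1) (hc : ∀ x ∈ S, c x = 1 ∨ c x = -1)
    (q εt : ℝ) (hq : 3 ≤ q)
    (hεt : εt = ∑ x ∈ S.filter (fun x => h x ≠ c x), D x)
    (hεtq : εt ≤ 1 / q)
    (α' Z' Z : ℝ) (hα' : α' = (1 / 2) * Real.log (q - 1))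
    (hZ' : Z' = 2 * (1 + 2 / q) * Real.sqrt ((1 / q) * (1 - 1 / q)))
    (hZ : Z = (1 - εt) * (2 - 1 / q) * Real.exp (-α') + εt * (1 / q) * Real.exp α')
    (D' Dstar : α → ℝ)
    (hD' : ∀ x ∈ S, D' x =
      if h x = c x then D x * (2 - 1 / q) * Real.exp (-α') / Z'
      else D x * (1 / q) * Real.exp α' / Z')
    (hDstar : ∀ x ∈ S, Dstar x =
      if h x = c x then D x * (2 - 1 / q) * Real.exp (-α') / Z
      else D x * (1 / q) * Real.exp α' / Z) :
    1 - 2 / q ≤ ∑ x ∈ S, Real.sqrt (D' x * Dstar x) :=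
  no_instance_fidelity_general S D h c hD hsum q εt hq hεt hεtq α' Z' Z hα' hZ' hZ D' Dstar hD'
    hDstar
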